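/- Let x be a perfect fractional matching of an n-vertex k-graph G, and let Y = (Y₁, Y₂, …) be the random walk started from the stationary distribution π on ordered (k-1)-tuples (with transitions proportional to x as above). Then for every index i ≥ 1 and every vertex v, the probability that Y_i = v equals 1/n. -/
import Mathlib


noncomputable def setWeight {n : ℕ} (E : Finset (Finset (Fin n)))
    (x : Finset (Fin n) → ℝ) (S : Finset (Fin n)) : ℝ :=
  ∑ e ∈ E.filter (fun e => S ⊆ e), x e

def tupleSet {n m : ℕ} (S : Fin (m + 1) → Fin n) : Finset (Fin n) :=
  Finset.image S Finset.univ

/-- The initial (stationary) distribution `π` on ordered `(k-1)`-tuples (`k = m+2`). -/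
noncomputable def statDist {n m : ℕ} (E : Finset (Finset (Fin n)))
    (x : Finset (Fin n) → ℝ) (S : Fin (m + 1) → Fin n) : ℝ :=
  if Function.Injective S then
    setWeight E x (tupleSet S) / ((Nat.factorial (m + 1) : ℝ) * n)
  else 0

/-- The transition kernel of the random walk defined via `x`. -/
noncomputable def transProb {n m : ℕ} (E : Finset (Finset (Fin n)))
    (x : Finset (Fin n) → ℝ) (S T : Fin (m + 1) → Fin n) : ℝ :=
  if (∀ j : Fin m, T j.castSucc = S j.succ) ∧ T (Fin.last m) ∉ tupleSet S then
    setWeight E x (insert (T (Fin.last m)) (tupleSet S)) / setWeight E x (tupleSet S)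
  else 0

/-- The `(k-1)`-tuple of vertices of a trajectory `y` at positions `i, …, i+m`. -/
def seg {n : ℕ} (m : ℕ) (y : ℕ → Fin n) (i : ℕ) : Fin (m + 1) → Fin n :=
  fun j => y (i + j)

/-- The probability of the walk `Y = (Y₀, …, Y_{t-1})`, started from the stationary
distribution, following the trajectory `y` (only positions `< t` are used). -/
noncomputable def walkProb {n : ℕ} (m : ℕ) (E : Finset (Finset (Fin n)))
    (x : Finset (Fin n) → ℝ) (t : ℕ) (y : ℕ → Fin n) : ℝ :=
  statDist E x (seg m y 0) *
    ∏ i ∈ Finset.range (t - (m + 1)), transProb E x (seg m y i) (seg m y (i + 1))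

/-- Extension of a finite trajectory to `ℕ`. -/
def extTraj {n t : ℕ} (ht : 0 < t) (y : Fin t → Fin n) : ℕ → Fin n :=
  fun i => if h : i < t then y ⟨i, h⟩ else y ⟨0, ht⟩

open Finset

section Basic
variable {n m : ℕ} {E : Finset (Finset (Fin n))} {x : Finset (Fin n) → ℝ}

lemma setWeight_nonneg (hx : ∀ e ∈ E, 0 ≤ x e) (S : Finset (Fin n)) :
    0 ≤ setWeight E x S :=
  Finset.sum_nonneg fun e he => hx e (Finset.mem_of_mem_filter e he)

lemma setWeight_mono (hx : ∀ e ∈ E, 0 ≤ x e) {S T : Finset (Fin n)} (h : S ⊆ T) :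
    setWeight E x T ≤ setWeight E x S := by
  classical
  apply Finset.sum_le_sum_of_subset_of_nonneg
  · intro e he
    rw [Finset.mem_filter] at he ⊢
    exact ⟨he.1, h.trans he.2⟩
  · intro e he _; exact hx e (Finset.mem_of_mem_filter e he)

lemma mem_tupleSet {S : Fin (m+1) → Fin n} (j : Fin (m+1)) : S j ∈ tupleSet S :=
  Finset.mem_image_of_mem _ (Finset.mem_univ _)

lemma tupleSet_card {S : Fin (m+1) → Fin n} (hS : Function.Injective S) :
    (tupleSet S).card = m + 1 := by
  rw [tupleSet, Finset.card_image_of_injective _ hS, Finset.card_univ, Fintype.card_fin]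

lemma sum_insert_setWeight (hcard : ∀ e ∈ E, e.card = m + 2)
    (A : Finset (Fin n)) (hA : A.card = m + 1) :
    ∑ w ∈ Aᶜ, setWeight E x (insert w A) = setWeight E x A := by
  classical
  unfold setWeight
  have key : ∀ w : Fin n, (E.filter fun e => insert w A ⊆ e)
      = (E.filter fun e => A ⊆ e).filter (fun e => w ∈ e) := by
    intro w
    rw [Finset.filter_filter]
    apply Finset.filter_congr
    intro e _
    simp [Finset.insert_subset_iff, and_comm]
  calc ∑ w ∈ Aᶜ, ∑ e ∈ E.filter (fun e => insert w A ⊆ e), x e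
      = ∑ w ∈ Aᶜ, ∑ e ∈ E.filter (fun e => A ⊆ e), (if w ∈ e then x e else 0) := by
        refine Finset.sum_congr rfl fun w _ => ?_
        rw [key w, Finset.sum_filter]
    _ = ∑ e ∈ E.filter (fun e => A ⊆ e), ∑ w ∈ Aᶜ, (if w ∈ e then x e else 0) :=
        Finset.sum_comm
    _ = ∑ e ∈ E.filter (fun e => A ⊆ e), x e := by
        refine Finset.sum_congr rfl fun e he => ?_
        rw [← Finset.sum_filter]
        have hAe : A ⊆ e := (Finset.mem_filter.mp he).2
        have hE : e ∈ E := (Finset.mem_filter.mp he).1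
        have : Aᶜ.filter (fun w => w ∈ e) = e \ A := by
          ext z; simp [Finset.mem_sdiff, and_comm]
        rw [this, Finset.sum_const, Finset.card_sdiff_of_subset hAe, hcard e hE, hA]
        simp

end Basic

section Shift
variable {n m : ℕ} {E : Finset (Finset (Fin n))} {x : Finset (Fin n) → ℝ}

/-- The shifted tuple `(S₁, …, S_m, w)`. -/
def shiftS (S : Fin (m+1) → Fin n) (w : Fin n) : Fin (m+1) → Fin n :=
  Fin.snoc (fun p : Fin m => S p.succ) w

@[simp] lemma shiftS_castSucc (S : Fin (m+1) → Fin n) (w : Fin n) (p : Fin m) :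
    shiftS S w p.castSucc = S p.succ := by
  simp [shiftS]

@[simp] lemma shiftS_last (S : Fin (m+1) → Fin n) (w : Fin n) :
    shiftS S w (Fin.last m) = w := by
  simp [shiftS]

lemma trans_shiftS (S : Fin (m+1) → Fin n) (w : Fin n) :
    transProb E x S (shiftS S w)
      = if w ∉ tupleSet S then
          setWeight E x (insert w (tupleSet S)) / setWeight E x (tupleSet S)
        else 0 := by
  unfold transProb
  simp only [shiftS_castSucc, shiftS_last]
  congr 1
  simp

lemma shiftS_injective {S : Fin (m+1) → Fin n} (hS : Function.Injective S)
    {w : Fin n} (hw : w ∉ tupleSet S) : Function.Injective (shiftS S w) := by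
  intro a b hab
  induction a using Fin.lastCases with
  | last =>
    induction b using Fin.lastCases with
    | last => rfl
    | cast b =>
      rw [shiftS_last, shiftS_castSucc] at hab
      exact absurd (hab ▸ mem_tupleSet b.succ) hw
  | cast a =>
    induction b using Fin.lastCases with
    | last =>
      rw [shiftS_last, shiftS_castSucc] at hab
      exact absurd (hab ▸ mem_tupleSet a.succ) hw
    | cast b =>
      rw [shiftS_castSucc, shiftS_castSucc] at hab
      exact congrArg Fin.castSucc (Fin.succ_injective _ (hS hab))

lemma tupleSet_shiftS_subset (S : Fin (m+1) → Fin n) (w : Fin n) :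
    tupleSet (shiftS S w) ⊆ insert w (tupleSet S) := by
  intro z hz
  rw [tupleSet, Finset.mem_image] at hz
  obtain ⟨j, -, hj⟩ := hz
  induction j using Fin.lastCases with
  | last => rw [shiftS_last] at hj; exact hj ▸ Finset.mem_insert_self _ _
  | cast j =>
    rw [shiftS_castSucc] at hj
    exact Finset.mem_insert_of_mem (hj ▸ mem_tupleSet j.succ)

lemma sum_trans_shiftS (hcard : ∀ e ∈ E, e.card = m + 2) (hx : ∀ e ∈ E, 0 ≤ x e)
    {S : Fin (m+1) → Fin n} (hS : Function.Injective S) :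
    ∑ w : Fin n, transProb E x S (shiftS S w)
      = if setWeight E x (tupleSet S) = 0 then 0 else 1 := by
  classical
  have h1 : ∑ w : Fin n, transProb E x S (shiftS S w)
      = ∑ w ∈ (tupleSet S)ᶜ, setWeight E x (insert w (tupleSet S))
          / setWeight E x (tupleSet S) := by
    calc ∑ w : Fin n, transProb E x S (shiftS S w)
        = ∑ w : Fin n, if w ∉ tupleSet S then
            setWeight E x (insert w (tupleSet S)) / setWeight E x (tupleSet S)
          else 0 := Finset.sum_congr rfl fun w _ => trans_shiftS S w
      _ = ∑ w ∈ Finset.univ.filter (fun w => w ∉ tupleSet S),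
            setWeight E x (insert w (tupleSet S)) / setWeight E x (tupleSet S) :=
          (Finset.sum_filter _ _).symm
      _ = _ := by
          apply Finset.sum_congr _ fun w _ => rfl
          ext z; simp
  rw [h1, ← Finset.sum_div, sum_insert_setWeight hcard _ (tupleSet_card hS)]
  by_cases h : setWeight E x (tupleSet S) = 0
  · simp [h]
  · simp [h, div_self h]
end Shift

section Walk2
variable {n m : ℕ} {E : Finset (Finset (Fin n))} {x : Finset (Fin n) → ℝ}

lemma statDist_ne_zero {S : Fin (m+1) → Fin n} (h : statDist E x S ≠ 0) :
    Function.Injective S ∧ setWeight E x (tupleSet S) ≠ 0 := by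
  unfold statDist at h
  split_ifs at h with hinj
  · exact ⟨hinj, fun h0 => h (by rw [h0, zero_div])⟩
  · exact absurd rfl h

lemma trans_ne_zero (hx : ∀ e ∈ E, 0 ≤ x e) {S T : Fin (m+1) → Fin n}
    (h : transProb E x S T ≠ 0) (hS : Function.Injective S) :
    Function.Injective T ∧ setWeight E x (tupleSet T) ≠ 0 := by
  unfold transProb at h
  split_ifs at h with hc
  · obtain ⟨h1, h2⟩ := hc
    have hnum : setWeight E x (insert (T (Fin.last m)) (tupleSet S)) ≠ 0 :=
      fun h0 => h (by rw [h0, zero_div])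
    have hTeq : T = shiftS S (T (Fin.last m)) := by
      funext j
      induction j using Fin.lastCases with
      | last => rw [shiftS_last]
      | cast j => rw [shiftS_castSucc, h1 j]
    constructor
    · rw [hTeq]; exact shiftS_injective hS h2
    · have hsub : tupleSet T ⊆ insert (T (Fin.last m)) (tupleSet S) := by
        have h3 := tupleSet_shiftS_subset S (T (Fin.last m))
        rw [← hTeq] at h3
        exact h3
      have := setWeight_mono hx hsub
      have hnn := setWeight_nonneg hx (insert (T (Fin.last m)) (tupleSet S))
      intro h0
      rw [h0] at this
      exact hnum (le_antisymm this hnn)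
  · exact absurd rfl h

/-- The probability of the first `j+m+1` steps of the walk. -/
noncomputable def walkP (E : Finset (Finset (Fin n))) (x : Finset (Fin n) → ℝ)
    (m j : ℕ) (z : ℕ → Fin n) : ℝ :=
  statDist E x (seg m z 0) *
    ∏ i ∈ Finset.range j, transProb E x (seg m z i) (seg m z (i + 1))

lemma walkP_succ (j : ℕ) (z : ℕ → Fin n) :
    walkP E x m (j+1) z = walkP E x m j z * transProb E x (seg m z j) (seg m z (j+1)) := by
  rw [walkP, walkP, Finset.prod_range_succ, mul_assoc]

lemma walkP_good (hx : ∀ e ∈ E, 0 ≤ x e) (j : ℕ) (z : ℕ → Fin n)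
    (h : walkP E x m j z ≠ 0) :
    Function.Injective (seg m z j) ∧ setWeight E x (tupleSet (seg m z j)) ≠ 0 := by
  induction j with
  | zero =>
    rw [walkP, Finset.range_zero, Finset.prod_empty, mul_one] at h
    exact statDist_ne_zero h
  | succ j ih =>
    rw [walkP_succ] at h
    have h1 : walkP E x m j z ≠ 0 := fun h0 => h (by rw [h0, zero_mul])
    have h2 : transProb E x (seg m z j) (seg m z (j+1)) ≠ 0 :=
      fun h0 => h (by rw [h0, mul_zero])
    exact trans_ne_zero hx h2 (ih h1).1

set_option maxHeartbeats 1000000 in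
/-- `n`-to-one summation over an updated coordinate. -/
lemma sum_update {t : ℕ} (c : Fin t) (F : (Fin t → Fin n) → ℝ) :
    ∑ y : Fin t → Fin n, ∑ w : Fin n, F (Function.update y c w)
      = n * ∑ y : Fin t → Fin n, F y := by
  classical
  have hinv : Function.Involutive (fun p : (Fin t → Fin n) × Fin n =>
      (Function.update p.1 c p.2, p.1 c)) := by
    intro p
    simp [Function.update_idem, Function.update_eq_self]
  calc ∑ y : Fin t → Fin n, ∑ w : Fin n, F (Function.update y c w)
      = ∑ p : (Fin t → Fin n) × Fin n, F (Function.update p.1 c p.2) :=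
        (Fintype.sum_prod_type (f := fun p => F (Function.update p.1 c p.2))).symm
    _ = ∑ p : (Fin t → Fin n) × Fin n, F p.1 :=
        Fintype.sum_equiv (Function.Involutive.toPerm _ hinv) _ _ (fun p => rfl)
    _ = ∑ y : Fin t → Fin n, ∑ _w : Fin n, F y := Fintype.sum_prod_type (f := fun p => F p.1)
    _ = n * ∑ y : Fin t → Fin n, F y := by
        rw [Finset.mul_sum]
        refine Finset.sum_congr rfl fun y _ => ?_
        rw [Finset.sum_const, Finset.card_univ, Fintype.card_fin, nsmul_eq_mul]

/-- Summing a function of the first `s` coordinates over all of `Fin t → Fin n`. -/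
lemma sum_castLE : ∀ (t s : ℕ) (h : s ≤ t) (F : (Fin s → Fin n) → ℝ),
    ∑ y : Fin t → Fin n, F (y ∘ Fin.castLE h)
      = (n : ℝ) ^ (t - s) * ∑ z : Fin s → Fin n, F z := by
  intro t
  induction t with
  | zero =>
    intro s h F
    interval_cases s
    simp only [Nat.sub_self, pow_zero, one_mul]
    refine Finset.sum_congr rfl fun y _ => ?_
    congr 1
  | succ u ih =>
    intro s h F
    rcases Nat.lt_or_ge s (u+1) with hs | hs
    · have hs' : s ≤ u := by omega
      calc ∑ y : Fin (u+1) → Fin n, F (y ∘ Fin.castLE h)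
          = ∑ p : Fin n × (Fin u → Fin n),
              F ((Fin.snocEquiv (fun _ => Fin n) p) ∘ Fin.castLE h) :=
            (Equiv.sum_comp (Fin.snocEquiv (fun _ => Fin n)) _).symm
        _ = ∑ _a : Fin n, ∑ z : Fin u → Fin n, F (z ∘ Fin.castLE hs') := by
            rw [Fintype.sum_prod_type]
            refine Finset.sum_congr rfl fun a _ => Finset.sum_congr rfl fun z _ => ?_
            congr 1
            funext j
            show (Fin.snoc z a : Fin (u+1) → Fin n) (Fin.castLE h j) = z (Fin.castLE hs' j)
            have : (Fin.castLE h j : Fin (u+1)) = Fin.castSucc (Fin.castLE hs' j) := by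
              apply Fin.ext; simp
            rw [this, Fin.snoc_castSucc]
        _ = (n : ℝ) ^ (u + 1 - s) * ∑ z : Fin s → Fin n, F z := by
            rw [Finset.sum_const, Finset.card_univ, Fintype.card_fin, nsmul_eq_mul,
              ih s hs' F, ← mul_assoc]
            congr 1
            rw [← pow_succ']
            congr 1
            omega
    · have : s = u + 1 := by omega
      subst this
      simp only [Nat.sub_self, pow_zero, one_mul]
      refine Finset.sum_congr rfl fun y _ => ?_
      congr 1

end Walk2

section Stationarity
variable {n m : ℕ} {E : Finset (Finset (Fin n))} {x : Finset (Fin n) → ℝ}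

lemma tupleSet_cons (u : Fin n) (f : Fin m → Fin n) :
    tupleSet (Fin.cons u f : Fin (m+1) → Fin n)
      = insert u (Finset.image f Finset.univ) := by
  ext z
  simp only [tupleSet, Finset.mem_image, Finset.mem_insert, Finset.mem_univ, true_and]
  constructor
  · rintro ⟨j, hj⟩
    induction j using Fin.cases with
    | zero => left; rw [Fin.cons_zero] at hj; exact hj.symm
    | succ j => right; rw [Fin.cons_succ] at hj; exact ⟨j, hj⟩
  · rintro (rfl | ⟨j, hj⟩)
    · exact ⟨0, Fin.cons_zero _ _⟩
    · exact ⟨j.succ, by rw [Fin.cons_succ]; exact hj⟩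

lemma tupleSet_eq_insert_last {T : Fin (m+1) → Fin n} :
    tupleSet T = insert (T (Fin.last m)) (Finset.image (fun p : Fin m => T p.castSucc) Finset.univ) := by
  ext z
  simp only [tupleSet, Finset.mem_image, Finset.mem_insert, Finset.mem_univ, true_and]
  constructor
  · rintro ⟨j, hj⟩
    induction j using Fin.lastCases with
    | last => left; exact hj.symm
    | cast j => right; exact ⟨j, hj⟩
  · rintro (rfl | ⟨j, hj⟩)
    · exact ⟨Fin.last m, rfl⟩
    · exact ⟨j.castSucc, hj⟩

lemma stationarity (hcard : ∀ e ∈ E, e.card = m + 2) (hx : ∀ e ∈ E, 0 ≤ x e)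
    (T : Fin (m+1) → Fin n) :
    ∑ u : Fin n, statDist E x (Fin.cons u (fun p : Fin m => T p.castSucc)) *
      transProb E x (Fin.cons u (fun p : Fin m => T p.castSucc)) T
      = statDist E x T := by
  classical
  by_cases hT : Function.Injective T
  · set B' : Finset (Fin n) := Finset.image (fun p : Fin m => T p.castSucc) Finset.univ with hB'
    set B : Finset (Fin n) := tupleSet T with hB
    have hBB : B = insert (T (Fin.last m)) B' := tupleSet_eq_insert_last
    have hlastB' : T (Fin.last m) ∉ B' := by
      rw [hB']
      simp only [Finset.mem_image, Finset.mem_univ, true_and, not_exists]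
      intro p hp
      exact absurd (hT hp) (Fin.ne_of_val_ne (by simp [Fin.val_last]; omega)).symm
    have key : ∀ u : Fin n,
        statDist E x (Fin.cons u (fun p : Fin m => T p.castSucc)) *
          transProb E x (Fin.cons u (fun p : Fin m => T p.castSucc)) T
        = if u ∉ B then setWeight E x (insert u B) / ((Nat.factorial (m+1) : ℝ) * n) else 0 := by
      intro u
      set Su : Fin (m+1) → Fin n := Fin.cons u (fun p : Fin m => T p.castSucc) with hSu
      have htup : tupleSet Su = insert u B' := tupleSet_cons _ _
      by_cases hu : u ∈ B
      · rw [if_neg (by simpa using hu)]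
        rw [hBB, Finset.mem_insert] at hu
        rcases hu with hu | hu
        · -- u = T last : transition probability is 0
          have : T (Fin.last m) ∈ tupleSet Su := by
            rw [htup, hu]; exact Finset.mem_insert_self _ _
          rw [transProb, if_neg (by tauto), mul_zero]
        · -- u ∈ B' : Su not injective
          have : ¬ Function.Injective Su := by
            rw [hSu, Fin.cons_injective_iff]
            rintro ⟨h1, -⟩
            apply h1
            rw [hB'] at hu
            obtain ⟨p, -, hp⟩ := Finset.mem_image.mp hu
            exact ⟨p, hp⟩
          rw [statDist, if_neg this, zero_mul]
      · rw [if_pos (by simpa using hu)]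
        rw [hBB, Finset.mem_insert, not_or] at hu
        obtain ⟨hu1, hu2⟩ := hu
        have hSinj : Function.Injective Su := by
          rw [hSu, Fin.cons_injective_iff]
          constructor
          · rintro ⟨p, hp⟩
            exact hu2 (hB' ▸ Finset.mem_image.mpr ⟨p, Finset.mem_univ _, hp⟩)
          · intro a b hab
            exact Fin.castSucc_injective m (hT hab)
        have hcond : (∀ j : Fin m, T j.castSucc = Su j.succ) ∧ T (Fin.last m) ∉ tupleSet Su := by
          constructor
          · intro j; rw [hSu, Fin.cons_succ]
          · rw [htup, Finset.mem_insert, not_or]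
            exact ⟨fun h => hu1 h.symm, hlastB'⟩
        rw [statDist, if_pos hSinj, transProb, if_pos hcond, htup]
        have hins : insert (T (Fin.last m)) (insert u B') = insert u B := by
          rw [hBB, Finset.insert_comm]
        rw [hins]
        by_cases hz : setWeight E x (insert u B') = 0
        · have : setWeight E x (insert u B) = 0 := by
            have hle := setWeight_mono hx (Finset.subset_insert (T (Fin.last m)) (insert u B'))
            rw [hins] at hle
            exact le_antisymm (hz ▸ hle) (setWeight_nonneg hx _)
          rw [this, hz, zero_div, zero_div, zero_mul]
        · rw [div_mul_div_comm,
            mul_comm (setWeight E x (insert u B')) (setWeight E x (insert u B)),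
            mul_div_mul_right _ _ hz]
    rw [Finset.sum_congr rfl (fun u _ => key u)]
    rw [← Finset.sum_filter]
    have hfil : (Finset.univ.filter (fun u => u ∉ B)) = Bᶜ := by
      ext z; simp
    rw [hfil, ← Finset.sum_div, sum_insert_setWeight hcard B (tupleSet_card hT),
      statDist, if_pos hT]
  · rw [statDist, if_neg hT]
    refine Finset.sum_eq_zero fun u _ => ?_
    by_cases h1 : statDist E x (Fin.cons u (fun p : Fin m => T p.castSucc)) = 0
    · rw [h1, zero_mul]
    · by_cases h2 : transProb E x (Fin.cons u (fun p : Fin m => T p.castSucc)) T = 0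
      · rw [h2, mul_zero]
      · exact absurd (trans_ne_zero hx h2 (statDist_ne_zero h1).1).1 hT

end Stationarity

section Reindex
variable {n m : ℕ} {E : Finset (Finset (Fin n))} {x : Finset (Fin n) → ℝ}

lemma shiftS_cons (T : Fin (m+1) → Fin n) (u : Fin n) :
    shiftS (Fin.cons u (fun q : Fin m => T q.castSucc)) (T (Fin.last m)) = T := by
  funext j
  induction j using Fin.lastCases with
  | last => rw [shiftS_last]
  | cast j => rw [shiftS_castSucc, Fin.cons_succ]

/-- The bijection `(T, u) ↦ (S, w)` with `S = (u, T₀, …, T_{m-1})`, `w = T_m`. -/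
def shiftPairEquiv (n m : ℕ) :
    ((Fin (m+1) → Fin n) × Fin n) ≃ ((Fin (m+1) → Fin n) × Fin n) where
  toFun p := (Fin.cons p.2 (fun q : Fin m => p.1 q.castSucc), p.1 (Fin.last m))
  invFun p := (shiftS p.1 p.2, p.1 0)
  left_inv p := by
    refine Prod.ext ?_ ?_
    · exact shiftS_cons p.1 p.2
    · simp
  right_inv p := by
    refine Prod.ext ?_ ?_
    · show Fin.cons (p.1 0) (fun q : Fin m => shiftS p.1 p.2 q.castSucc) = p.1
      funext j
      induction j using Fin.cases with
      | zero => rw [Fin.cons_zero]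
      | succ q => rw [Fin.cons_succ, shiftS_castSucc]
    · simp

lemma sum_statDist_shift (hcard : ∀ e ∈ E, e.card = m + 2) (hx : ∀ e ∈ E, 0 ≤ x e)
    (g : (Fin (m+1) → Fin n) → ℝ) :
    ∑ S : Fin (m+1) → Fin n, statDist E x S *
        (∑ w : Fin n, transProb E x S (shiftS S w) * g (shiftS S w))
      = ∑ T : Fin (m+1) → Fin n, statDist E x T * g T := by
  calc ∑ S : Fin (m+1) → Fin n, statDist E x S *
        (∑ w : Fin n, transProb E x S (shiftS S w) * g (shiftS S w))
      = ∑ S : Fin (m+1) → Fin n, ∑ w : Fin n,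
          statDist E x S * (transProb E x S (shiftS S w) * g (shiftS S w)) := by
        exact Finset.sum_congr rfl fun S _ => Finset.mul_sum _ _ _
    _ = ∑ p : (Fin (m+1) → Fin n) × Fin n,
          statDist E x p.1 * (transProb E x p.1 (shiftS p.1 p.2) * g (shiftS p.1 p.2)) :=
        (Fintype.sum_prod_type (f := fun p : (Fin (m+1) → Fin n) × Fin n =>
          statDist E x p.1 * (transProb E x p.1 (shiftS p.1 p.2) * g (shiftS p.1 p.2)))).symm
    _ = ∑ p : (Fin (m+1) → Fin n) × Fin n,
          statDist E x (Fin.cons p.2 (fun q : Fin m => p.1 q.castSucc)) *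
            (transProb E x (Fin.cons p.2 (fun q : Fin m => p.1 q.castSucc)) p.1 * g p.1) := by
        refine (Equiv.sum_comp (shiftPairEquiv n m) _).symm.trans ?_
        refine Finset.sum_congr rfl fun p _ => ?_
        rw [show ((shiftPairEquiv n m) p) = (Fin.cons p.2 (fun q : Fin m => p.1 q.castSucc),
          p.1 (Fin.last m)) from rfl]
        simp only [shiftS_cons]
    _ = ∑ T : Fin (m+1) → Fin n, statDist E x T * g T := by
        rw [Fintype.sum_prod_type (f := fun p : (Fin (m+1) → Fin n) × Fin n =>
          statDist E x (Fin.cons p.2 (fun q : Fin m => p.1 q.castSucc)) *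
            (transProb E x (Fin.cons p.2 (fun q : Fin m => p.1 q.castSucc)) p.1 * g p.1))]
        refine Finset.sum_congr rfl fun T _ => ?_
        rw [← stationarity hcard hx T, Finset.sum_mul]
        exact Finset.sum_congr rfl fun u _ => by ring

end Reindex

section Induction
variable {n m : ℕ} {E : Finset (Finset (Fin n))} {x : Finset (Fin n) → ℝ}

lemma seg_update_eq {t : ℕ} (ht : 0 < t) (y : Fin t → Fin n) (c : Fin t) (w : Fin n)
    (q : ℕ) (h : q + m < c.val) :
    seg m (extTraj ht (Function.update y c w)) q = seg m (extTraj ht y) q := by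
  funext p
  have hp : (p : ℕ) ≤ m := Nat.lt_succ_iff.mp p.isLt
  have hlt : q + (p : ℕ) < t := lt_trans (by omega) c.isLt
  show extTraj ht (Function.update y c w) (q + p) = extTraj ht y (q + p)
  unfold extTraj
  rw [dif_pos hlt, dif_pos hlt]
  have hne : (⟨q + (p : ℕ), hlt⟩ : Fin t) ≠ c := Fin.ne_of_val_ne (by simp; omega)
  rw [Function.update_of_ne hne]

lemma seg_update_succ {t : ℕ} (ht : 0 < t) (y : Fin t → Fin n) (c : Fin t) (w : Fin n)
    (q : ℕ) (hc : (c : ℕ) = q + m + 1) :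
    seg m (extTraj ht (Function.update y c w)) (q + 1)
      = shiftS (seg m (extTraj ht y) q) w := by
  have hct : q + m + 1 < t := hc ▸ c.isLt
  funext p
  induction p using Fin.lastCases with
  | last =>
    rw [shiftS_last]
    show extTraj ht (Function.update y c w) (q + 1 + (Fin.last m : ℕ)) = w
    have hlt : q + 1 + ((Fin.last m : Fin (m+1)) : ℕ) < t := by simp [Fin.val_last]; omega
    unfold extTraj
    rw [dif_pos hlt]
    have : (⟨q + 1 + ((Fin.last m : Fin (m+1)) : ℕ), hlt⟩ : Fin t) = c :=
      Fin.ext (by simp [Fin.val_last]; omega)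
    rw [this, Function.update_self]
  | cast p =>
    rw [shiftS_castSucc]
    show extTraj ht (Function.update y c w) (q + 1 + (p.castSucc : ℕ))
        = extTraj ht y (q + (p.succ : ℕ))
    have h1 : q + 1 + ((p.castSucc : Fin (m+1)) : ℕ) < t := by
      simp only [Fin.coe_castSucc]
      have := p.isLt; omega
    have h2 : q + ((p.succ : Fin (m+1)) : ℕ) < t := by
      simp only [Fin.val_succ]
      have := p.isLt; omega
    unfold extTraj
    rw [dif_pos h1, dif_pos h2]
    have hne : (⟨q + 1 + ((p.castSucc : Fin (m+1)) : ℕ), h1⟩ : Fin t) ≠ c := by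
      apply Fin.ne_of_val_ne
      simp only [Fin.coe_castSucc]
      have := p.isLt; omega
    rw [Function.update_of_ne hne]
    congr 1
    apply Fin.ext
    simp [Fin.val_succ, Fin.coe_castSucc]
    omega

lemma walkP_update {t : ℕ} (ht : 0 < t) (y : Fin t → Fin n) (c : Fin t) (w : Fin n)
    (j : ℕ) (hc : j + m < c.val) :
    walkP E x m j (extTraj ht (Function.update y c w)) = walkP E x m j (extTraj ht y) := by
  unfold walkP
  congr 1
  · rw [seg_update_eq ht y c w 0 (by omega)]
  · refine Finset.prod_congr rfl fun i hi => ?_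
    have hi' : i < j := Finset.mem_range.mp hi
    rw [seg_update_eq ht y c w i (by omega), seg_update_eq ht y c w (i+1) (by omega)]

lemma seg_zero_castLE {t : ℕ} (ht : 0 < t) (y : Fin t → Fin n) (h : m + 1 ≤ t) :
    seg m (extTraj ht y) 0 = y ∘ Fin.castLE h := by
  funext p
  have hlt : 0 + (p : ℕ) < t := by have := p.isLt; omega
  show extTraj ht y (0 + (p : ℕ)) = y (Fin.castLE h p)
  unfold extTraj
  rw [dif_pos hlt]
  congr 1
  apply Fin.ext
  simp

lemma forward_marginal (hcard : ∀ e ∈ E, e.card = m + 2) (hx : ∀ e ∈ E, 0 ≤ x e)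
    (hn : 0 < n) {t : ℕ} (ht : 0 < t) :
    ∀ (j : ℕ), j + m + 1 ≤ t → ∀ (g : (Fin (m+1) → Fin n) → ℝ),
    ∑ y : Fin t → Fin n, walkP E x m j (extTraj ht y) * g (seg m (extTraj ht y) j)
      = (n : ℝ) ^ (t - (j + m + 1)) * ∑ S : Fin (m+1) → Fin n, statDist E x S * g S := by
  intro j
  induction j with
  | zero =>
    intro hj g
    have hj' : m + 1 ≤ t := by omega
    calc ∑ y : Fin t → Fin n, walkP E x m 0 (extTraj ht y) * g (seg m (extTraj ht y) 0)
        = ∑ y : Fin t → Fin n,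
            statDist E x (y ∘ Fin.castLE hj') * g (y ∘ Fin.castLE hj') := by
          refine Finset.sum_congr rfl fun y _ => ?_
          rw [walkP, Finset.range_zero, Finset.prod_empty, mul_one,
            seg_zero_castLE ht y hj']
      _ = (n : ℝ) ^ (t - (m + 1)) * ∑ S : Fin (m+1) → Fin n, statDist E x S * g S :=
          sum_castLE t (m+1) hj' (fun S => statDist E x S * g S)
      _ = _ := by norm_num
  | succ j ih =>
    intro hj g
    have hj' : j + m + 1 ≤ t := by omega
    set c : Fin t := ⟨j + m + 1, by omega⟩ with hc
    have key := sum_update (n := n) c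
      (fun y => walkP E x m (j+1) (extTraj ht y) * g (seg m (extTraj ht y) (j+1)))
    have inner : ∀ y : Fin t → Fin n,
        (∑ w : Fin n, walkP E x m (j+1) (extTraj ht (Function.update y c w)) *
          g (seg m (extTraj ht (Function.update y c w)) (j+1)))
        = walkP E x m j (extTraj ht y) *
            (∑ w : Fin n, transProb E x (seg m (extTraj ht y) j)
              (shiftS (seg m (extTraj ht y) j) w) * g (shiftS (seg m (extTraj ht y) j) w)) := by
      intro y
      rw [Finset.mul_sum]
      refine Finset.sum_congr rfl fun w _ => ?_
      rw [walkP_succ, walkP_update ht y c w j (by simp [hc]),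
        seg_update_eq ht y c w j (by simp [hc]),
        seg_update_succ ht y c w j (by simp [hc]), mul_assoc]
    rw [Finset.sum_congr rfl (fun y _ => inner y)] at key
    rw [ih hj' (fun S => ∑ w : Fin n, transProb E x S (shiftS S w) * g (shiftS S w))] at key
    rw [sum_statDist_shift hcard hx g] at key
    have hpow : (n : ℝ) ^ (t - (j + m + 1)) = n * (n : ℝ) ^ (t - (j + 1 + m + 1)) := by
      rw [← pow_succ']
      congr 1
      omega
    rw [hpow, mul_assoc] at key
    have hn' : (n : ℝ) ≠ 0 := by positivity
    exact mul_left_cancel₀ hn' key.symm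

lemma elim_marginal (hcard : ∀ e ∈ E, e.card = m + 2) (hx : ∀ e ∈ E, 0 ≤ x e)
    (hn : 0 < n) {t : ℕ} (ht : 0 < t) (j : ℕ) :
    ∀ (q : ℕ), j ≤ q → q + m + 1 ≤ t → ∀ (g : (Fin (m+1) → Fin n) → ℝ),
    ∑ y : Fin t → Fin n, walkP E x m q (extTraj ht y) * g (seg m (extTraj ht y) j)
      = (n : ℝ) ^ (t - (q + m + 1)) * ∑ S : Fin (m+1) → Fin n, statDist E x S * g S := by
  intro q hq
  induction q, hq using Nat.le_induction with
  | base => exact fun hq g => forward_marginal hcard hx hn ht j hq g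
  | succ q hjq ih =>
    intro hq g
    have hq' : q + m + 1 ≤ t := by omega
    set c : Fin t := ⟨q + m + 1, by omega⟩ with hc
    have key := sum_update (n := n) c
      (fun y => walkP E x m (q+1) (extTraj ht y) * g (seg m (extTraj ht y) j))
    have inner : ∀ y : Fin t → Fin n,
        (∑ w : Fin n, walkP E x m (q+1) (extTraj ht (Function.update y c w)) *
          g (seg m (extTraj ht (Function.update y c w)) j))
        = walkP E x m q (extTraj ht y) * g (seg m (extTraj ht y) j) := by
      intro y
      have step : ∀ w : Fin n,
          walkP E x m (q+1) (extTraj ht (Function.update y c w)) *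
            g (seg m (extTraj ht (Function.update y c w)) j)
          = walkP E x m q (extTraj ht y) *
              transProb E x (seg m (extTraj ht y) q) (shiftS (seg m (extTraj ht y) q) w) *
              g (seg m (extTraj ht y) j) := by
        intro w
        rw [walkP_succ, walkP_update ht y c w q (by simp [hc]),
          seg_update_eq ht y c w q (by simp [hc]),
          seg_update_succ ht y c w q (by simp [hc]),
          seg_update_eq ht y c w j (by simp [hc]; omega)]
      rw [Finset.sum_congr rfl (fun w _ => step w), ← Finset.sum_mul, ← Finset.mul_sum]
      by_cases hz : walkP E x m q (extTraj ht y) = 0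
      · rw [hz, zero_mul, zero_mul]
      · obtain ⟨hinj, hsw⟩ := walkP_good hx q (extTraj ht y) hz
        rw [sum_trans_shiftS hcard hx hinj, if_neg hsw, mul_one]
    rw [Finset.sum_congr rfl (fun y _ => inner y)] at key
    rw [ih hq' g] at key
    have hpow : (n : ℝ) ^ (t - (q + m + 1)) = n * (n : ℝ) ^ (t - (q + 1 + m + 1)) := by
      rw [← pow_succ']
      congr 1
      omega
    rw [hpow, mul_assoc] at key
    have hn' : (n : ℝ) ≠ 0 := by positivity
    exact mul_left_cancel₀ hn' key.symm

end Induction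

section Marginal
variable {n m : ℕ} {E : Finset (Finset (Fin n))} {x : Finset (Fin n) → ℝ}

lemma descFactorial_succ_self (m : ℕ) : (m+1).descFactorial m = (m+1).factorial := by
  induction m with
  | zero => rfl
  | succ m ih =>
    rw [Nat.succ_descFactorial_succ, ih, ← Nat.factorial_succ]

lemma count_inj (hcard : ∀ e ∈ E, e.card = m + 2) {e : Finset (Fin n)} (he : e ∈ E)
    (v : Fin n) (r : Fin (m+1)) :
    (Finset.univ.filter (fun S : Fin (m+1) → Fin n =>
      (Function.Injective S ∧ S r = v) ∧ tupleSet S ⊆ e)).card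
      = if v ∈ e then Nat.factorial (m+1) else 0 := by
  classical
  by_cases hv : v ∈ e
  · rw [if_pos hv]
    rw [← Fintype.card_subtype]
    have equ : {S : Fin (m+1) → Fin n //
        (Function.Injective S ∧ S r = v) ∧ tupleSet S ⊆ e}
        ≃ (Fin m ↪ {z // z ∈ e.erase v}) := by
      refine
        { toFun := fun S => ⟨fun p => ⟨S.1 (r.succAbove p), ?_⟩, ?_⟩
          invFun := fun f => ⟨Fin.insertNth r v (fun p => (f p : Fin n)), ?_, ?_⟩
          left_inv := ?_
          right_inv := ?_ }
      · obtain ⟨S, ⟨hinj, hrv⟩, hsub⟩ := S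
        rw [Finset.mem_erase]
        refine ⟨fun h => Fin.succAbove_ne r p (hinj (h.trans hrv.symm)), hsub (mem_tupleSet _)⟩
      · obtain ⟨S, ⟨hinj, hrv⟩, hsub⟩ := S
        intro a b hab
        have : S (r.succAbove a) = S (r.succAbove b) := congrArg Subtype.val hab
        exact Fin.succAbove_right_injective (hinj this)
      · constructor
        · have key2 : ∀ j, j ≠ r → Fin.insertNth (α := fun _ => Fin n) r v (fun p => (f p : Fin n)) j ≠ v := by
            intro j hj
            obtain ⟨p, rfl⟩ := Fin.exists_succAbove_eq hj
            rw [Fin.insertNth_apply_succAbove]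
            exact (Finset.mem_erase.mp (f p).2).1
          intro a b hab
          rcases eq_or_ne a r with ha | ha <;> rcases eq_or_ne b r with hb | hb
          · rw [ha, hb]
          · exfalso
            apply key2 b hb
            rw [← hab, ha]
            simp
          · exfalso
            apply key2 a ha
            rw [hab, hb]
            simp
          · obtain ⟨p, rfl⟩ := Fin.exists_succAbove_eq ha
            obtain ⟨q, rfl⟩ := Fin.exists_succAbove_eq hb
            rw [Fin.insertNth_apply_succAbove, Fin.insertNth_apply_succAbove] at hab
            exact congrArg r.succAbove (f.injective (Subtype.ext hab))
        · simp
      · intro z hz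
        rw [tupleSet, Finset.mem_image] at hz
        obtain ⟨j, -, hj⟩ := hz
        rcases eq_or_ne j r with rfl | hjr
        · rw [Fin.insertNth_apply_same] at hj
          exact hj ▸ hv
        · obtain ⟨p, rfl⟩ := Fin.exists_succAbove_eq hjr
          rw [Fin.insertNth_apply_succAbove] at hj
          exact Finset.mem_of_mem_erase (hj ▸ (f p).2)
      · rintro ⟨S, ⟨hinj, hrv⟩, hsub⟩
        apply Subtype.ext
        funext j
        show Fin.insertNth (α := fun _ => Fin n) r v (fun p => S (r.succAbove p)) j = S j
        rcases eq_or_ne j r with rfl | hjr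
        · rw [Fin.insertNth_apply_same, hrv]
        · obtain ⟨p, rfl⟩ := Fin.exists_succAbove_eq hjr
          rw [Fin.insertNth_apply_succAbove]
      · intro f
        apply DFunLike.ext
        intro p
        apply Subtype.ext
        show Fin.insertNth (α := fun _ => Fin n) r v (fun p => (f p : Fin n)) (r.succAbove p) = (f p : Fin n)
        rw [Fin.insertNth_apply_succAbove]
    rw [Fintype.card_congr equ, Fintype.card_embedding_eq, Fintype.card_fin,
      Fintype.card_coe, Finset.card_erase_of_mem hv, hcard e he]
    exact descFactorial_succ_self m
  · rw [if_neg hv, Finset.card_eq_zero, Finset.filter_eq_empty_iff]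
    rintro S - ⟨⟨-, hrv⟩, hsub⟩
    exact hv (hrv ▸ hsub (mem_tupleSet r))

lemma statDist_marginal (hcard : ∀ e ∈ E, e.card = m + 2)
    (hpfm : ∀ v : Fin n, ∑ e ∈ E.filter (fun e => v ∈ e), x e = 1)
    (hn : 0 < n) (r : Fin (m+1)) (v : Fin n) :
    ∑ S : Fin (m+1) → Fin n, statDist E x S * (if S r = v then 1 else 0)
      = 1 / n := by
  classical
  have hterm : ∀ S : Fin (m+1) → Fin n,
      statDist E x S * (if S r = v then 1 else 0)
      = if Function.Injective S ∧ S r = v then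
          setWeight E x (tupleSet S) / ((Nat.factorial (m+1) : ℝ) * n) else 0 := by
    intro S
    rw [statDist]
    by_cases h1 : Function.Injective S <;> by_cases h2 : S r = v <;>
      simp [h1, h2]
  rw [Finset.sum_congr rfl (fun S _ => hterm S), ← Finset.sum_filter]
  rw [← Finset.sum_div]
  have hsum : ∑ S ∈ Finset.univ.filter
        (fun S : Fin (m+1) → Fin n => Function.Injective S ∧ S r = v),
      setWeight E x (tupleSet S) = (Nat.factorial (m+1) : ℝ) := by
    unfold setWeight
    calc ∑ S ∈ Finset.univ.filter
          (fun S : Fin (m+1) → Fin n => Function.Injective S ∧ S r = v),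
          ∑ e ∈ E.filter (fun e => tupleSet S ⊆ e), x e
        = ∑ S ∈ Finset.univ.filter
            (fun S : Fin (m+1) → Fin n => Function.Injective S ∧ S r = v),
          ∑ e ∈ E, if tupleSet S ⊆ e then x e else 0 := by
          exact Finset.sum_congr rfl fun S _ => (Finset.sum_filter _ _)
      _ = ∑ e ∈ E, ∑ S ∈ Finset.univ.filter
            (fun S : Fin (m+1) → Fin n => Function.Injective S ∧ S r = v),
          if tupleSet S ⊆ e then x e else 0 := Finset.sum_comm
      _ = ∑ e ∈ E, (if v ∈ e then (Nat.factorial (m+1) : ℝ) else 0) * x e := by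
          refine Finset.sum_congr rfl fun e he => ?_
          rw [← Finset.sum_filter, Finset.filter_filter, Finset.sum_const,
            count_inj hcard he v r]
          split_ifs <;> simp
      _ = (Nat.factorial (m+1) : ℝ) * ∑ e ∈ E.filter (fun e => v ∈ e), x e := by
          rw [Finset.mul_sum, Finset.sum_filter]
          refine Finset.sum_congr rfl fun e he => ?_
          split_ifs <;> simp
      _ = (Nat.factorial (m+1) : ℝ) := by rw [hpfm v, mul_one]
  rw [hsum]
  rw [div_eq_div_iff
    (mul_ne_zero (Nat.cast_ne_zero.mpr (Nat.factorial_ne_zero _)) (Nat.cast_ne_zero.mpr (by omega)))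
    (Nat.cast_ne_zero.mpr (by omega : n ≠ 0) : (n:ℝ) ≠ 0)]
  ring

end Marginal

/-- Let `x` be a perfect fractional matching of an `n`-vertex `k`-graph (`k = m+2`) and
`Y` the associated random walk started from the stationary distribution `π`.
Then for every index `i` and every vertex `v`, `P[Y_i = v] = 1/n`. -/
theorem walk_visits_uniformly (n m t : ℕ) (ht : m + 1 ≤ t)
    (E : Finset (Finset (Fin n))) (hcard : ∀ e ∈ E, e.card = m + 2)
    (x : Finset (Fin n) → ℝ) (hx : ∀ e ∈ E, 0 ≤ x e ∧ x e ≤ 1)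
    (hpfm : ∀ v : Fin n, ∑ e ∈ E.filter (fun e => v ∈ e), x e = 1)
    (i : ℕ) (hi : i < t) (v : Fin n) :
    ∑ y : Fin t → Fin n,
        walkProb m E x t (extTraj (Nat.lt_of_lt_of_le (Nat.succ_pos m) ht) y) *
          (if y ⟨i, hi⟩ = v then 1 else 0)
      = 1 / n := by
  classical
  rcases Nat.eq_zero_or_pos n with hn | hn
  · subst hn
    haveI : IsEmpty (Fin t → Fin 0) := ⟨fun y => (y ⟨0, by omega⟩).elim0⟩
    rw [Finset.univ_eq_empty, Finset.sum_empty]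
    norm_num
  · set ht0 : 0 < t := Nat.lt_of_lt_of_le (Nat.succ_pos m) ht with hht
    set j0 := i - m with hj0
    have hrlt : i - j0 < m + 1 := by omega
    set r : Fin (m+1) := ⟨i - j0, hrlt⟩ with hr
    have hseg : ∀ y : Fin t → Fin n, seg m (extTraj ht0 y) j0 r = y ⟨i, hi⟩ := by
      intro y
      show extTraj ht0 y (j0 + ((r : Fin (m+1)) : ℕ)) = y ⟨i, hi⟩
      have hidx : j0 + ((r : Fin (m+1)) : ℕ) = i := by
        rw [hr]
        simp only []
        omega
      rw [hidx]
      unfold extTraj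
      rw [dif_pos hi]
    have hq : (t - (m+1)) + m + 1 ≤ t := by omega
    have hjq : j0 ≤ t - (m+1) := by omega
    have hmain := elim_marginal hcard (fun e he => (hx e he).1) hn ht0 j0 (t - (m+1)) hjq hq
      (fun S => if S r = v then (1:ℝ) else 0)
    calc ∑ y : Fin t → Fin n,
          walkProb m E x t (extTraj ht0 y) * (if y ⟨i, hi⟩ = v then 1 else 0)
        = ∑ y : Fin t → Fin n, walkP E x m (t - (m+1)) (extTraj ht0 y) *
            (if seg m (extTraj ht0 y) j0 r = v then (1:ℝ) else 0) := by
          refine Finset.sum_congr rfl fun y _ => ?_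
          rw [hseg y]
          rfl
      _ = (n : ℝ) ^ (t - ((t - (m+1)) + m + 1)) *
            ∑ S : Fin (m+1) → Fin n, statDist E x S * (if S r = v then (1:ℝ) else 0) :=
          hmain
      _ = 1 / n := by
          have h0 : t - ((t - (m+1)) + m + 1) = 0 := by omega
          rw [h0, pow_zero, one_mul]
          exact statDist_marginal hcard hpfm hn r v
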